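/- For integers k ≥ 3, r ≥ 2, l ≥ 2, let n = k(⌊r/2⌋ + ⌊(r+l)/2⌋ − 1). There exists an edge-coloring of K_{n,n} = G(U,V) with exactly k colors that contains no rainbow path P_4 on 4 vertices and no monochromatic copy of P_r ∪ P_{r+l} (disjoint union of a path on r vertices and a path on r+l vertices). In particular, bgr_k(P_4 : P_r ∪ P_{r+l}) ≥ k(⌊r/2⌋ + ⌊(r+l)/2⌋) − k + 1. -/

import Mathlib

open Function Finset SimpleGraph

/-- A rainbow path on 4 vertices `u₁ v₁ u₂ v₂` (middle pattern). -/
def rbP4pat {N : ℕ} {γ : Type*} (c : Fin N → Fin N → γ) : Prop :=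
  ∃ u₁ u₂ v₁ v₂ : Fin N, u₁ ≠ u₂ ∧ v₁ ≠ v₂ ∧
    c u₁ v₁ ≠ c u₂ v₁ ∧ c u₁ v₁ ≠ c u₂ v₂ ∧ c u₂ v₁ ≠ c u₂ v₂

/-- The coloring `c` of `K_{N,N}` contains a rainbow path on 4 vertices. -/
def hasRainbowP4 {N : ℕ} {γ : Type*} (c : Fin N → Fin N → γ) : Prop :=
  rbP4pat c ∨ rbP4pat (fun v u => c u v)

/-- A rainbow path on 5 vertices `u₁ v₁ u₂ v₂ u₃` (one-sided pattern). -/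
def rbP5pat {N : ℕ} {γ : Type*} (c : Fin N → Fin N → γ) : Prop :=
  ∃ u₁ u₂ u₃ v₁ v₂ : Fin N, u₁ ≠ u₂ ∧ u₁ ≠ u₃ ∧ u₂ ≠ u₃ ∧ v₁ ≠ v₂ ∧
    c u₁ v₁ ≠ c u₂ v₁ ∧ c u₁ v₁ ≠ c u₂ v₂ ∧ c u₁ v₁ ≠ c u₃ v₂ ∧
    c u₂ v₁ ≠ c u₂ v₂ ∧ c u₂ v₁ ≠ c u₃ v₂ ∧ c u₂ v₂ ≠ c u₃ v₂

/-- The coloring `c` of `K_{N,N}` contains a rainbow path on 5 vertices. -/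
def hasRainbowP5 {N : ℕ} {γ : Type*} (c : Fin N → Fin N → γ) : Prop :=
  rbP5pat c ∨ rbP5pat (fun v u => c u v)

/-- The coloring `c` of `K_{N,N}` contains a rainbow star `K_{1,3}`:
some vertex (on either side) has three incident edges with pairwise distinct colors. -/
def hasRainbowK13 {N : ℕ} {γ : Type*} (c : Fin N → Fin N → γ) : Prop :=
  (∃ u v₁ v₂ v₃ : Fin N, c u v₁ ≠ c u v₂ ∧ c u v₁ ≠ c u v₃ ∧ c u v₂ ≠ c u v₃) ∨
  (∃ v u₁ u₂ u₃ : Fin N, c u₁ v ≠ c u₂ v ∧ c u₁ v ≠ c u₃ v ∧ c u₂ v ≠ c u₃ v)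

/-- The coloring `c` of `K_{N,N}` (first coordinate: side `U`, second: side `V`)
contains a monochromatic copy of the (bipartite) graph `H`. -/
def hasMonoCopy {N : ℕ} {γ : Type*} {α : Type*} (c : Fin N → Fin N → γ)
    (H : SimpleGraph α) : Prop :=
  ∃ i : γ, ∃ f : α → Fin N ⊕ Fin N, Function.Injective f ∧
    ∀ a b, H.Adj a b → ∃ u v : Fin N, c u v = i ∧
      ((f a = Sum.inl u ∧ f b = Sum.inr v) ∨ (f a = Sum.inr v ∧ f b = Sum.inl u))

/-- The coloring `c` of `K_{N,N}` contains a monochromatic copy of `K_{s,t}`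
(in either orientation with respect to the two sides). -/
def hasMonoKst {N : ℕ} {γ : Type*} (c : Fin N → Fin N → γ) (s t : ℕ) : Prop :=
  ∃ i : γ, ∃ S T : Finset (Fin N),
    ((S.card = s ∧ T.card = t) ∨ (S.card = t ∧ T.card = s)) ∧
    ∀ u ∈ S, ∀ v ∈ T, c u v = i

/-- Disjoint union of a family of graphs, on the sigma type. -/
def sigmaUnion {ι : Type*} {β : ι → Type*} (G : ∀ i, SimpleGraph (β i)) :
    SimpleGraph (Σ i, β i) where
  Adj x y := ∃ i a b, (G i).Adj a b ∧ x = ⟨i, a⟩ ∧ y = ⟨i, b⟩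
  symm := ⟨by rintro x y ⟨i, a, b, h, rfl, rfl⟩; exact ⟨i, b, a, h.symm, rfl, rfl⟩⟩
  loopless := ⟨by
    rintro x ⟨i, a, b, h, rfl, h2⟩
    obtain rfl : a = b := by simpa using h2
    exact h.ne rfl⟩


/-- `n` witnesses the bipartite Gallai–Ramsey property for a rainbow `P₄`
versus a monochromatic `P_r ∪ P_{r+l}` with `k` colors. -/
def bgrP4PP (k r l n : ℕ) : Prop :=
  k ≤ n ^ 2 ∧ ∀ N : ℕ, n ≤ N → ∀ c : Fin N → Fin N → Fin k,
    (∀ i : Fin k, ∃ u v, c u v = i) →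
    hasRainbowP4 c ∨ hasMonoCopy c (pathGraph r ⊕g pathGraph (r + l))

/-!
Colour each edge of `K_{kM,kM}`, `M = ⌊r/2⌋ + ⌊(r+l)/2⌋ - 1`, by the block of size `M` of `U`
containing its `U`-endpoint. Two edges at a vertex of `U` have the same colour, so every `P₄` has
two equally coloured edges. A monochromatic `P_r ∪ P_{r+l}` contains a matching of
`⌊r/2⌋ + ⌊(r+l)/2⌋` edges, whose `U`-endpoints would be distinct vertices of one block of size `M`.
-/

namespace SimpleGraph

variable {α α' ι ι' : Type*}

-- Injectivity of `Sum.elim p q` makes the edges `p j — q j` pairwise vertex-disjoint.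
def HasIndexedMatching (H : SimpleGraph α) (ι : Type*) : Prop :=
  ∃ p q : ι → α, (∀ j, H.Adj (p j) (q j)) ∧ Injective (Sum.elim p q)

theorem pathGraph_hasIndexedMatching (n : ℕ) : (pathGraph n).HasIndexedMatching (Fin (n / 2)) := by
  refine ⟨fun j => ⟨2 * j, by omega⟩, fun j => ⟨2 * j + 1, by omega⟩,
    fun j => by simp [pathGraph_adj], ?_⟩
  rintro (j | j) (j' | j') h <;> simp [Fin.ext_iff] at h ⊢ <;> omega

theorem HasIndexedMatching.sum {G : SimpleGraph α} {G' : SimpleGraph α'}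
    (hG : G.HasIndexedMatching ι) (hG' : G'.HasIndexedMatching ι') :
    (G ⊕g G').HasIndexedMatching (ι ⊕ ι') := by
  obtain ⟨p, q, hpq, hinj⟩ := hG
  obtain ⟨p', q', hpq', hinj'⟩ := hG'
  refine ⟨Sum.map p p', Sum.map q q', by rintro (j | j) <;> simp [hpq, hpq'], ?_⟩
  have hcomm : Sum.elim (Sum.map p p') (Sum.map q q') =
      Sum.map (Sum.elim p q) (Sum.elim p' q') ∘ Equiv.sumSumSumComm ι ι' ι ι' := by
    funext x
    rcases x with (j | j) | (j | j) <;> rfl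
  rw [hcomm]
  exact (Sum.map_injective.2 ⟨hinj, hinj'⟩).comp (Equiv.injective _)

end SimpleGraph

section ColorByLeft

variable {N : ℕ} {γ α ι : Type*}

def colorByLeft (g : Fin N → γ) : Fin N → Fin N → γ := fun u _ => g u

theorem not_hasRainbowP4_colorByLeft (g : Fin N → γ) : ¬ hasRainbowP4 (colorByLeft g) := by
  rintro (⟨_, _, _, _, _, _, _, _, h⟩ | ⟨_, _, _, _, _, _, h, _, _⟩) <;> exact h rfl

theorem exists_embedding_fiber_of_hasMonoCopy_colorByLeft {g : Fin N → γ} {H : SimpleGraph α}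
    (h : hasMonoCopy (colorByLeft g) H) (hH : H.HasIndexedMatching ι) :
    ∃ i, Nonempty (ι ↪ {u // g u = i}) := by
  obtain ⟨i, f, hf, hmono⟩ := h
  obtain ⟨p, q, hpq, hinj⟩ := hH
  have hend : ∀ j, ∃ u, g u = i ∧ ∃ x : ι ⊕ ι, x.elim id id = j ∧
      f (Sum.elim p q x) = Sum.inl u := by
    intro j
    obtain ⟨u, v, hu, (⟨hp, -⟩ | ⟨-, hq⟩)⟩ := hmono _ _ (hpq j)
    exacts [⟨u, hu, .inl j, rfl, hp⟩, ⟨u, hu, .inr j, rfl, hq⟩]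
  choose e he x hxj hfx using hend
  refine ⟨i, ⟨fun j => ⟨e j, he j⟩, fun j j' hjj' => ?_⟩⟩
  have hee : e j = e j' := congrArg Subtype.val hjj'
  have hsame : f (Sum.elim p q (x j)) = f (Sum.elim p q (x j')) := by rw [hfx, hfx, hee]
  have hx : x j = x j' := hinj (hf hsame)
  rw [← hxj j, ← hxj j', hx]

end ColorByLeft

-- The paper's colouring: the edges at the `i`-th block `U_i` of `M` vertices of `U` get colour `i`.
def blockColoring (k M : ℕ) : Fin (k * M) → Fin (k * M) → Fin k := colorByLeft Fin.divNat

theorem blockColoring_surjective {k M : ℕ} (hM : 0 < M) (i : Fin k) :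
    ∃ u v, blockColoring k M u v = i :=
  ⟨finProdFinEquiv (i, ⟨0, hM⟩), finProdFinEquiv (i, ⟨0, hM⟩),
    congrArg Prod.fst (finProdFinEquiv.symm_apply_apply (i, ⟨0, hM⟩))⟩

theorem not_hasRainbowP4_blockColoring (k M : ℕ) : ¬ hasRainbowP4 (blockColoring k M) :=
  not_hasRainbowP4_colorByLeft _

theorem card_divNat_fiber_le {m n : ℕ} (i : Fin m) :
    Fintype.card {u : Fin (m * n) // u.divNat = i} ≤ n := by
  refine (Fintype.card_le_of_injective (fun u => u.1.modNat) fun u u' h => ?_).trans_eq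
    (Fintype.card_fin n)
  refine Subtype.ext (finProdFinEquiv.symm.injective ?_)
  simp only [finProdFinEquiv_symm_apply, u.2, u'.2]
  exact congrArg _ h

theorem not_hasMonoCopy_blockColoring {k M : ℕ} {α ι : Type*} [Fintype ι] {H : SimpleGraph α}
    (hH : H.HasIndexedMatching ι) (hM : M < Fintype.card ι) :
    ¬ hasMonoCopy (blockColoring k M) H := by
  intro h
  obtain ⟨i, ⟨e⟩⟩ := exists_embedding_fiber_of_hasMonoCopy_colorByLeft h hH
  exact hM.not_ge ((Fintype.card_le_of_embedding e).trans (card_divNat_fiber_le i))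

theorem bgrP4PP.lt_of_coloring {k r l m N : ℕ} (hm : bgrP4PP k r l m)
    (c : Fin N → Fin N → Fin k) (hsurj : ∀ i : Fin k, ∃ u v, c u v = i)
    (hrb : ¬ hasRainbowP4 c) (hmono : ¬ hasMonoCopy c (pathGraph r ⊕g pathGraph (r + l))) :
    N < m := by
  by_contra! hNm
  exact (hm.2 N hNm c hsurj).elim hrb hmono

theorem stmt4_general (k r l : ℕ) (hr : 2 ≤ r) :
    (∃ c : Fin (k * (r / 2 + (r + l) / 2 - 1)) → Fin (k * (r / 2 + (r + l) / 2 - 1)) → Fin k,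
      (∀ i : Fin k, ∃ u v, c u v = i) ∧
      ¬ hasRainbowP4 c ∧
      ¬ hasMonoCopy c (pathGraph r ⊕g pathGraph (r + l))) ∧
    (∀ m : ℕ, bgrP4PP k r l m → k * (r / 2 + (r + l) / 2) - k + 1 ≤ m) := by
  set M := r / 2 + (r + l) / 2 - 1
  have hM : 0 < M := by omega
  have hsurj := blockColoring_surjective (k := k) hM
  have hnoMono : ¬ hasMonoCopy (blockColoring k M) (pathGraph r ⊕g pathGraph (r + l)) :=
    not_hasMonoCopy_blockColoring
      ((pathGraph_hasIndexedMatching r).sum (pathGraph_hasIndexedMatching (r + l)))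
      (by simp only [Fintype.card_sum, Fintype.card_fin]; omega)
  refine ⟨⟨_, hsurj, not_hasRainbowP4_blockColoring k M, hnoMono⟩, fun m hm => ?_⟩
  have hlt := hm.lt_of_coloring _ hsurj (not_hasRainbowP4_blockColoring k M) hnoMono
  rw [Nat.mul_sub_one] at hlt
  omega

/-- lower-bound construction for `bgr_k(P₄ : P_r ∪ P_{r+l})`:
on `K_{n,n}` with `n = k(⌊r/2⌋+⌊(r+l)/2⌋−1)` there is an exact `k`-coloring with no
rainbow `P₄` and no monochromatic `P_r ∪ P_{r+l}`; in particular
`bgr_k(P₄ : P_r ∪ P_{r+l}) ≥ k(⌊r/2⌋+⌊(r+l)/2⌋) − k + 1`. -/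
theorem stmt4 (k r l : ℕ) (hk : 3 ≤ k) (hr : 2 ≤ r) (hl : 2 ≤ l) :
    (∃ c : Fin (k * (r / 2 + (r + l) / 2 - 1)) → Fin (k * (r / 2 + (r + l) / 2 - 1)) → Fin k,
      (∀ i : Fin k, ∃ u v, c u v = i) ∧
      ¬ hasRainbowP4 c ∧
      ¬ hasMonoCopy c (pathGraph r ⊕g pathGraph (r + l))) ∧
    (∀ m : ℕ, bgrP4PP k r l m → k * (r / 2 + (r + l) / 2) - k + 1 ≤ m) :=
  stmt4_general k r l hr
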